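/- The module Θ(λ, α, β, γ) over the affine-Virasoro algebra of type A₁ is simple if and only if 2β is not a nonnegative integer. -/

import Mathlib

open MvPolynomial

abbrev R2 : Type := MvPolynomial (Fin 2) ℂ

/-- Substitution `g(s,t) ↦ g(s - u, t + v)`. -/
noncomputable def sh (u v : ℂ) : R2 →ₐ[ℂ] R2 := aeval ![X 0 - C u, X 1 + C v]

/-- Action of `e_i` in `Θ(λ,α,β,γ)`. -/
noncomputable def thE (lam a b : ℂ) (i : ℤ) (g : R2) : R2 :=
  C (lam ^ i * a) * (C 2⁻¹ * X 1 + C b) * sh (i : ℂ) (-2) g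

/-- Action of `f_i` in `Θ(λ,α,β,γ)`. -/
noncomputable def thF (lam a b : ℂ) (i : ℤ) (g : R2) : R2 :=
  C (-(lam ^ i / a)) * (C 2⁻¹ * X 1 - C b) * sh (i : ℂ) 2 g

/-- Action of `h_i`. -/
noncomputable def opH (lam : ℂ) (i : ℤ) (g : R2) : R2 :=
  C (lam ^ i) * X 1 * sh (i : ℂ) 0 g

/-- Action of `d_i`. -/
noncomputable def opD (lam c : ℂ) (i : ℤ) (g : R2) : R2 :=
  C (lam ^ i) * (X 0 + C ((i : ℂ) * c)) * sh (i : ℂ) 0 g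

/-!
Since `h_0` and `d_0` act as multiplication by `t` and `s`, an invariant subspace `W` is an ideal
of `ℂ[s,t]`, and by `h_i` it also contains `t·g(s - i, t)` with `g`. If `g ∈ W` is nonzero of degree
`d` in `s`, the `d`-th forward difference of `g` in `s` is `d!` times its leading coefficient, so
`W` contains a nonzero polynomial in `t` alone. These polynomials form an ideal `I` of `ℂ[t]`,
stable under `P ↦ (t + 2β) P(t - 2)` and `P ↦ (t - 2β) P(t + 2)` (from `e_0` and `f_0`). If
`I ≠ ℂ[t]`, the common zero set of `I` is finite and nonempty; a zero `y ≠ -2β` forces the zero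
`y - 2` and a zero `y ≠ 2β` forces the zero `y + 2`. Walking down and up from one zero therefore
reaches `-2β` and `2β` in steps of `2`, so `2β ∈ ℕ`.

Conversely, if `2β = n ∈ ℕ`, the polynomials vanishing on the lines `t = 2(β - k)`, `0 ≤ k ≤ n`,
form a proper nonzero invariant subspace: on line `k`, `e_i·g` only involves `g` on line `k + 1`
and its factor `t/2 + β` vanishes on line `n`, while `f_i·g` only involves `g` on line `k - 1` and
its factor `t/2 - β` vanishes on line `0`.
-/

theorem exists_nat_add_mul_eq_of_finite {K : Type*} [Field K] [CharZero K] {S : Set K}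
    (hS : S.Finite) {x z c : K} (hc : c ≠ 0) (hx : x ∈ S)
    (hstep : ∀ y ∈ S, y ≠ z → y + c ∈ S) : ∃ k : ℕ, x + k * c = z := by
  by_contra! hne
  have hmem : ∀ k : ℕ, x + k * c ∈ S := by
    intro k
    induction k with
    | zero => simpa using hx
    | succ k ih => simpa [add_mul, add_assoc] using hstep _ ih (hne k)
  refine Set.infinite_of_injective_forall_mem (fun k l hkl => ?_) hmem hS
  simpa [hc] using hkl

namespace Polynomial

theorem sum_range_choose_smul_comp_X_add_C {A : Type*} [CommRing A] (Q : A[X]) :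
    ∑ k ∈ Finset.range (Q.natDegree + 1),
        ((-1 : ℤ) ^ (Q.natDegree - k) * Q.natDegree.choose k) • Q.comp (X + C (k : A)) =
      C (Q.leadingCoeff * Q.natDegree.factorial) := by
  have h := congrFun (Q.map C).fwdDiff_iter_degree_eq_factorial X
  rw [fwdDiff_iter_eq_sum_shift] at h
  simp only [natDegree_map_eq_of_injective C_injective, leadingCoeff_map_of_injective C_injective,
    eval_map, nsmul_one] at h
  simpa [zsmul_eq_mul, comp] using h

variable {K : Type*} [Field K]

theorem exists_forall_isRoot_of_ne_top [IsAlgClosed K] {I : Ideal K[X]} (hI : I ≠ ⊤) :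
    ∃ y, ∀ P ∈ I, P.IsRoot y := by
  set q := Submodule.IsPrincipal.generator I
  have hq : ¬IsUnit q := fun hu => hI (Ideal.eq_top_of_isUnit_mem _
    (Submodule.IsPrincipal.generator_mem I) hu)
  obtain ⟨y, hy⟩ := IsAlgClosed.exists_root q (mt isUnit_iff_degree_eq_zero.mpr hq)
  exact ⟨y, fun P hP => hy.dvd ((Submodule.IsPrincipal.mem_iff_generator_dvd I).mp hP)⟩

theorem exists_nat_sub_eq_mul_of_ideal_stable [IsAlgClosed K] [CharZero K] {I : Ideal K[X]}
    (hbot : I ≠ ⊥) (htop : I ≠ ⊤) {a b c : K} (hc : c ≠ 0)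
    (ha : ∀ P ∈ I, (X - C a) * P.comp (X + C c) ∈ I)
    (hb : ∀ P ∈ I, (X - C b) * P.comp (X - C c) ∈ I) :
    ∃ k : ℕ, a - b = k * c := by
  set Z := {y : K | ∀ P ∈ I, P.IsRoot y}
  obtain ⟨P₀, hP₀, hP₀0⟩ := Submodule.exists_mem_ne_zero_of_ne_bot hbot
  have hZ : Z.Finite := (finite_setOfPred_isRoot hP₀0).subset fun y hy => hy P₀ hP₀
  obtain ⟨ρ, hρ⟩ := exists_forall_isRoot_of_ne_top htop
  have step (y : K) (hy : y ∈ Z) (e : K) (he : y ≠ e) (d : K)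
      (hI : ∀ P ∈ I, (X - C e) * P.comp (X + C d) ∈ I) : y + d ∈ Z := fun P hP => by
    simpa [sub_ne_zero.mpr he] using hy _ (hI P hP)
  obtain ⟨k, hk⟩ := exists_nat_add_mul_eq_of_finite hZ hc hρ
    fun y hy hya => step y hy a hya c ha
  obtain ⟨j, hj⟩ := exists_nat_add_mul_eq_of_finite hZ (neg_ne_zero.mpr hc) hρ
    fun y hy hyb => step y hy b hyb (-c) (by simpa [sub_eq_add_neg] using hb)
  exact ⟨k + j, by push_cast; linear_combination hj - hk⟩

end Polynomial

theorem MvPolynomial.mul_mem_of_forall_X_mul_mem {R σ : Type*} [CommSemiring R]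
    (W : Submodule R (MvPolynomial σ R)) (hX : ∀ i, ∀ g ∈ W, X i * g ∈ W) (p : MvPolynomial σ R)
    {g : MvPolynomial σ R} (hg : g ∈ W) : p * g ∈ W := by
  induction p using MvPolynomial.induction_on with
  | C x => simpa [smul_eq_C_mul] using W.smul_mem x hg
  | add p q hp hq => simpa [add_mul] using add_mem hp hq
  | mul_X p i hp => simpa [mul_assoc, mul_left_comm] using hX i _ hp

@[simp] lemma sh_X0 (u v : ℂ) : sh u v (X 0) = X 0 - C u := by simp [sh]

@[simp] lemma sh_X1 (u v : ℂ) : sh u v (X 1) = X 1 + C v := by simp [sh]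

@[simp] lemma sh_zero_zero (g : R2) : sh 0 0 g = g := by
  suffices sh 0 0 = AlgHom.id ℂ R2 from DFunLike.congr_fun this g
  ext i
  fin_cases i <;> simp

lemma eval_sh (s t u v : ℂ) (g : R2) : eval ![s, t] (sh u v g) = eval ![s - u, t + v] g := by
  have h : (aeval ![s, t]).comp (sh u v) = aeval ![s - u, t + v] := by
    ext i
    fin_cases i <;> simp
  exact DFunLike.congr_fun h g

noncomputable def polyT : Polynomial ℂ →ₐ[ℂ] R2 := Polynomial.aeval (X 1)

@[simp] lemma polyT_X : polyT Polynomial.X = X 1 := Polynomial.aeval_X _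

lemma sh_polyT (u v : ℂ) (P : Polynomial ℂ) :
    sh u v (polyT P) = polyT (P.comp (Polynomial.X + Polynomial.C v)) := by
  rw [polyT, ← Polynomial.aeval_algHom_apply, Polynomial.aeval_comp]
  simp

@[simp] lemma polyT_C (x : ℂ) : polyT (Polynomial.C x) = C x := Polynomial.aeval_C _ _

noncomputable def asPolyInS : R2 ≃ₐ[ℂ] Polynomial (Polynomial ℂ) :=
  (finSuccEquiv ℂ 1).trans (Polynomial.mapAlgEquiv (uniqueAlgEquiv ℂ (Fin 1)))

@[simp] lemma asPolyInS_X0 : asPolyInS (X 0) = Polynomial.X := by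
  simp [asPolyInS, Polynomial.mapAlgEquiv, finSuccEquiv_X_zero]

@[simp] lemma asPolyInS_X1 : asPolyInS (X 1) = Polynomial.C Polynomial.X := by
  rw [show (1 : Fin 2) = Fin.succ 0 from rfl, asPolyInS, AlgEquiv.trans_apply,
    finSuccEquiv_X_succ]
  simp [Polynomial.mapAlgEquiv]

@[simp] lemma asPolyInS_C (x : ℂ) : asPolyInS (C x) = Polynomial.C (Polynomial.C x) :=
  asPolyInS.commutes x

lemma asPolyInS_polyT (P : Polynomial ℂ) : asPolyInS (polyT P) = Polynomial.C P := by
  have h : asPolyInS.toAlgHom.comp polyT = Polynomial.CAlgHom :=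
    Polynomial.algHom_ext (by simp)
  exact DFunLike.congr_fun h P

lemma asPolyInS_sh (u : ℂ) (g : R2) :
    asPolyInS (sh u 0 g) = (asPolyInS g).comp (Polynomial.X - Polynomial.C (Polynomial.C u)) := by
  have h : asPolyInS.toAlgHom.comp (sh u 0) =
      ((Polynomial.aeval (Polynomial.X - Polynomial.C (Polynomial.C u))).restrictScalars ℂ).comp
        asPolyInS.toAlgHom := by
    refine MvPolynomial.algHom_ext fun i => ?_
    fin_cases i <;> simp
  simpa [Polynomial.comp_eq_aeval] using DFunLike.congr_fun h g

lemma thE_zero (lam a b : ℂ) (g : R2) :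
    thE lam a b 0 g = (a / 2) • ((X 1 + C (2 * b)) * sh 0 (-2) g) := by
  have h : (C 2⁻¹ * X 1 + C b : R2) = C 2⁻¹ * (X 1 + C (2 * b)) := by
    rw [mul_add, ← map_mul, inv_mul_cancel_left₀ two_ne_zero]
  simp only [thE, h, zpow_zero, one_mul, Int.cast_zero, smul_eq_C_mul, div_eq_mul_inv, map_mul]
  ring

lemma thF_zero (lam a b : ℂ) (g : R2) :
    thF lam a b 0 g = (-(a⁻¹ * 2⁻¹)) • ((X 1 - C (2 * b)) * sh 0 2 g) := by
  have h : (C 2⁻¹ * X 1 - C b : R2) = C 2⁻¹ * (X 1 - C (2 * b)) := by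
    rw [mul_sub, ← map_mul, inv_mul_cancel_left₀ two_ne_zero]
  simp only [thF, h, zpow_zero, one_div, Int.cast_zero, smul_eq_C_mul, map_mul, map_neg]
  ring

lemma opH_eq_smul (lam : ℂ) (i : ℤ) (g : R2) : opH lam i g = lam ^ i • (X 1 * sh i 0 g) := by
  simp [opH, smul_eq_C_mul, mul_assoc]

lemma opD_zero (lam c : ℂ) (g : R2) : opD lam c 0 g = X 0 * g := by
  simp [opD]

lemma exists_polyT_mem_of_ne_zero (W : Submodule ℂ R2)
    (hW : ∀ k : ℕ, ∀ g ∈ W, X 1 * sh (-k) 0 g ∈ W) {g : R2} (hg : g ∈ W) (hg0 : g ≠ 0) :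
    ∃ P : Polynomial ℂ, P ≠ 0 ∧ polyT P ∈ W := by
  set Q := asPolyInS g
  set d := Q.natDegree
  have hQ : Q ≠ 0 := (map_ne_zero_iff _ asPolyInS.injective).mpr hg0
  refine ⟨Polynomial.X * (Q.leadingCoeff * (d.factorial : Polynomial ℂ)), ?_, ?_⟩
  · exact mul_ne_zero Polynomial.X_ne_zero
      (mul_ne_zero (Polynomial.leadingCoeff_ne_zero.mpr hQ) (by exact_mod_cast d.factorial_ne_zero))
  have key : polyT (Polynomial.X * (Q.leadingCoeff * (d.factorial : Polynomial ℂ))) =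
      ∑ k ∈ Finset.range (d + 1), ((-1 : ℤ) ^ (d - k) * d.choose k) • (X 1 * sh (-k) 0 g) := by
    apply asPolyInS.injective
    rw [asPolyInS_polyT, map_mul, Q.sum_range_choose_smul_comp_X_add_C.symm, Finset.mul_sum,
      map_sum]
    refine Finset.sum_congr rfl fun k _ => ?_
    simp only [map_zsmul, map_mul, asPolyInS_X1, asPolyInS_sh, mul_smul_comm]
    simp [Q, d]
  rw [key]
  exact sum_mem fun k _ => zsmul_mem (hW k g hg) _

lemma one_mem_of_polyT_mem (W : Submodule ℂ R2) (hmul : ∀ p, ∀ g ∈ W, p * g ∈ W) (b : ℂ)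
    (hb : ¬∃ n : ℕ, (n : ℂ) = 2 * b)
    (hE : ∀ g ∈ W, (X 1 + C (2 * b)) * sh 0 (-2) g ∈ W)
    (hF : ∀ g ∈ W, (X 1 - C (2 * b)) * sh 0 2 g ∈ W)
    {P₀ : Polynomial ℂ} (hP₀ : P₀ ≠ 0) (hP₀W : polyT P₀ ∈ W) : (1 : R2) ∈ W := by
  let I : Ideal (Polynomial ℂ) :=
    { carrier := {P | polyT P ∈ W}
      add_mem' := fun hP hQ => by simpa using add_mem hP hQ
      zero_mem' := by simp
      smul_mem' := fun c P hP => by simpa using hmul (polyT c) _ hP }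
  have hmem (P : Polynomial ℂ) : P ∈ I ↔ polyT P ∈ W := Iff.rfl
  have hI : I ≠ ⊥ := fun h => hP₀ (by simpa [h] using (hmem P₀).mpr hP₀W)
  suffices I = ⊤ by simpa using (hmem 1).mp (this ▸ Submodule.mem_top)
  by_contra htop
  obtain ⟨k, hk⟩ := Polynomial.exists_nat_sub_eq_mul_of_ideal_stable hI htop
    (a := -(2 * b)) (b := 2 * b) (c := -2) (by norm_num)
    (fun P hP => (hmem _).mpr (by simpa [sh_polyT] using hE _ hP))
    (fun P hP => (hmem _).mpr (by simpa [sh_polyT] using hF _ hP))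
  exact hb ⟨k, by linear_combination hk / 2⟩

theorem eq_bot_or_eq_top_of_invariant {lam a b c : ℂ} (hlam : lam ≠ 0) (ha : a ≠ 0)
    (hb : ¬∃ n : ℕ, (n : ℂ) = 2 * b) (W : Submodule ℂ R2)
    (hE : ∀ i : ℤ, ∀ g ∈ W, thE lam a b i g ∈ W)
    (hF : ∀ i : ℤ, ∀ g ∈ W, thF lam a b i g ∈ W)
    (hH : ∀ i : ℤ, ∀ g ∈ W, opH lam i g ∈ W)
    (hD : ∀ i : ℤ, ∀ g ∈ W, opD lam c i g ∈ W) :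
    W = ⊥ ∨ W = ⊤ := by
  refine or_iff_not_imp_left.mpr fun hW => ?_
  obtain ⟨g, hg, hg0⟩ := Submodule.exists_mem_ne_zero_of_ne_bot hW
  have hshift (i : ℤ) (g : R2) (hg : g ∈ W) : X 1 * sh i 0 g ∈ W :=
    (W.smul_mem_iff (zpow_ne_zero i hlam)).mp (opH_eq_smul lam i g ▸ hH i g hg)
  have hmul (p g : R2) (hg : g ∈ W) : p * g ∈ W := by
    refine mul_mem_of_forall_X_mul_mem W (fun i g hg => ?_) p hg
    fin_cases i
    · simpa [opD_zero] using hD 0 g hg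
    · simpa using hshift 0 g hg
  obtain ⟨P₀, hP₀, hP₀W⟩ :=
    exists_polyT_mem_of_ne_zero W (fun k g hg => by simpa using hshift (-k) g hg) hg hg0
  have h1 := one_mem_of_polyT_mem W hmul b hb
    (fun g hg => (W.smul_mem_iff (div_ne_zero ha two_ne_zero)).mp (thE_zero lam a b g ▸ hE 0 g hg))
    (fun g hg => (W.smul_mem_iff (by simpa using ha)).mp (thF_zero lam a b g ▸ hF 0 g hg))
    hP₀ hP₀W
  exact W.eq_top_iff'.mpr fun p => by simpa using hmul p 1 h1

section Eval

variable (s t : ℂ) (g : R2)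

lemma eval_thE (lam a b : ℂ) (i : ℤ) :
    eval ![s, t] (thE lam a b i g) = lam ^ i * a * (2⁻¹ * t + b) * eval ![s - i, t - 2] g := by
  simp [thE, eval_sh, sub_eq_add_neg]

lemma eval_thF (lam a b : ℂ) (i : ℤ) :
    eval ![s, t] (thF lam a b i g) = -(lam ^ i / a) * (2⁻¹ * t - b) * eval ![s - i, t + 2] g := by
  simp [thF, eval_sh]

lemma eval_opH (lam : ℂ) (i : ℤ) :
    eval ![s, t] (opH lam i g) = lam ^ i * t * eval ![s - i, t] g := by
  simp [opH, eval_sh]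

lemma eval_opD (lam c : ℂ) (i : ℤ) :
    eval ![s, t] (opD lam c i g) = lam ^ i * (s + i * c) * eval ![s - i, t] g := by
  simp [opD, eval_sh]

end Eval

def vanishingOnLines (b : ℂ) (n : ℕ) : Submodule ℂ R2 where
  carrier := {g | ∀ (s : ℂ) (k : ℕ), k ≤ n → eval ![s, 2 * (b - k)] g = 0}
  add_mem' hf hg s k hk := by simp [hf s k hk, hg s k hk]
  zero_mem' := by simp
  smul_mem' c g hg s k hk := by simp [hg s k hk]

section vanishingOnLines

variable {b : ℂ} {n : ℕ} {g : R2}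

lemma thE_mem_vanishingOnLines (hn : (n : ℂ) = 2 * b) (hg : g ∈ vanishingOnLines b n)
    (lam a : ℂ) (i : ℤ) : thE lam a b i g ∈ vanishingOnLines b n := by
  intro s k hk
  rw [eval_thE]
  rcases hk.lt_or_eq with hk | rfl
  · have h := hg (s - i) (k + 1) hk
    push_cast at h
    rw [show 2 * (b - k) - 2 = 2 * (b - (k + 1)) by ring, h, mul_zero]
  · rw [show 2⁻¹ * (2 * (b - k)) + b = 0 by linear_combination -hn, mul_zero, zero_mul]

lemma thF_mem_vanishingOnLines (hg : g ∈ vanishingOnLines b n) (lam a : ℂ) (i : ℤ) :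
    thF lam a b i g ∈ vanishingOnLines b n := by
  intro s k hk
  rw [eval_thF]
  rcases k with _ | k
  · simp
  · have h := hg (s - i) k (by omega)
    rw [show 2 * (b - (k + 1 : ℕ)) + 2 = 2 * (b - k) by push_cast; ring, h, mul_zero]

lemma opH_mem_vanishingOnLines (hg : g ∈ vanishingOnLines b n) (lam : ℂ) (i : ℤ) :
    opH lam i g ∈ vanishingOnLines b n :=
  fun s k hk => by rw [eval_opH, hg _ k hk, mul_zero]

lemma opD_mem_vanishingOnLines (hg : g ∈ vanishingOnLines b n) (lam c : ℂ) (i : ℤ) :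
    opD lam c i g ∈ vanishingOnLines b n :=
  fun s k hk => by rw [eval_opD, hg _ k hk, mul_zero]

end vanishingOnLines

lemma vanishingOnLines_ne_top (b : ℂ) (n : ℕ) : vanishingOnLines b n ≠ ⊤ := fun h => by
  simpa using (h ▸ Submodule.mem_top : (1 : R2) ∈ vanishingOnLines b n) 0 0 n.zero_le

lemma vanishingOnLines_ne_bot (b : ℂ) (n : ℕ) : vanishingOnLines b n ≠ ⊥ := by
  set P : R2 := ∏ k ∈ Finset.range (n + 1), (X 1 - C (2 * (b - k)))
  refine (Submodule.ne_bot_iff _).mpr ⟨P, fun s k hk => ?_, fun h0 => ?_⟩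
  · simp only [P, map_prod, map_sub, eval_X, eval_C]
    exact Finset.prod_eq_zero (i := k) (Finset.mem_range.mpr (by omega)) (by simp)
  · have h := congrArg (eval ![0, 2 * (b + 1)]) h0
    simp only [P, map_prod, map_sub, eval_X, eval_C, map_zero, Finset.prod_eq_zero_iff,
      Matrix.cons_val_one, Matrix.cons_val_fin_one] at h
    obtain ⟨k, -, hk⟩ := h
    have : (k + 1 : ℂ) ≠ 0 := by exact_mod_cast k.succ_ne_zero
    exact this (by linear_combination sub_eq_zero.mp hk / 2)

/-- `C` acts as zero, so simplicity means that every subspace invariant under all `e_i`, `f_i`,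
`h_i`, `d_i` is `⊥` or `⊤`. -/
theorem stmt9 (lam a : ℂ) (hlam : lam ≠ 0) (ha : a ≠ 0) (b c : ℂ) :
    (∀ W : Submodule ℂ R2,
      (∀ i : ℤ, ∀ g ∈ W, thE lam a b i g ∈ W) →
      (∀ i : ℤ, ∀ g ∈ W, thF lam a b i g ∈ W) →
      (∀ i : ℤ, ∀ g ∈ W, opH lam i g ∈ W) →
      (∀ i : ℤ, ∀ g ∈ W, opD lam c i g ∈ W) →
      W = ⊥ ∨ W = ⊤)
    ↔ ¬ ∃ n : ℕ, (n : ℂ) = 2 * b := by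
  refine ⟨fun hsimple ⟨n, hn⟩ => ?_, fun hb W => eq_bot_or_eq_top_of_invariant hlam ha hb W⟩
  rcases hsimple (vanishingOnLines b n)
      (fun i _ hg => thE_mem_vanishingOnLines hn hg lam a i)
      (fun i _ hg => thF_mem_vanishingOnLines hg lam a i)
      (fun i _ hg => opH_mem_vanishingOnLines hg lam i)
      (fun i _ hg => opD_mem_vanishingOnLines hg lam c i) with h | h
  · exact vanishingOnLines_ne_bot b n h
  · exact vanishingOnLines_ne_top b n h
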